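/- Let 0 < h < 1/4 and 2h < a < 1/2 − 2h. Define ψ(t) = 6Δ_h(t) − τ_h(t+a) − τ_h(t−a) on T. Then ψ̂(n) ≥ 0 for all n ∈ Z, and ‖ψ‖_{A^p(T)}^p ≤ 12^p h^{p−1} for every p ≥ 1. -/

import Mathlib

/-!
The periodised triangle `Δ_h` has Fourier coefficients `Δ̂_h(n) = (1 - cos 2πnh) / (2π²n²h)`
(`Δ̂_h(0) = h`), which lie in `[0, h]` and sum to `Δ_h(0) = 1`. On the circle the trapezoid is
`τ_h = Δ_h(· - h) + Δ_h + Δ_h(· + h)`, and the translates by `±a` together multiply coefficients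
by `2 cos 2πna`; hence `ψ̂(n) = (6 - ν̂(n)) Δ̂_h(n)` with `ν̂(n) = 2 cos 2πna · (1 + 2 cos 2πnh)`,
a number in `[-6, 6]`. So `0 ≤ ψ̂(n) ≤ 12 Δ̂_h(n)`, and
`∑ ψ̂(n)^p ≤ 12^p ∑ Δ̂_h(n)^(p-1) Δ̂_h(n) ≤ 12^p h^(p-1)`.
-/

open MeasureTheory

/-- The `n`-th Fourier coefficient of a 1-periodic function `f : ℝ → ℂ`,
`f̂(n) = ∫₀¹ f(t) e^{-2πint} dt`. -/
noncomputable def fourierCoefP (f : ℝ → ℂ) (n : ℤ) : ℂ :=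
  ∫ t in (0:ℝ)..1, f t * Complex.exp ((-2) * (Real.pi : ℂ) * Complex.I * (n : ℂ) * (t : ℂ))

open Real Function Set intervalIntegral

theorem Function.Periodic.eq_of_eqOn_Ico {α β : Type*} [AddCommGroup α] [LinearOrder α]
    [IsOrderedAddMonoid α] [Archimedean α] {f g : α → β} {c : α} (hf : Periodic f c)
    (hg : Periodic g c) (hc : 0 < c) (a : α) (hfg : EqOn f g (Ico a (a + c))) : f = g := by
  funext x
  obtain ⟨m, hm, -⟩ := existsUnique_add_zsmul_mem_Ico hc x a
  rw [← hf.zsmul m x, ← hg.zsmul m x]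
  exact hfg hm

theorem Function.Periodic.intervalIntegrable_of_eqOn {E : Type*} [NormedAddCommGroup E]
    {f g : ℝ → E} {c : ℝ} (hf : Periodic f c) (hc : 0 < c) (hg : Continuous g) (a : ℝ)
    (hfg : EqOn f g (Icc a (a + c))) (b₁ b₂ : ℝ) : IntervalIntegrable f volume b₁ b₂ :=
  hf.intervalIntegrable hc.ne' ((hg.intervalIntegrable a (a + c)).congr fun _ ht =>
    (hfg (uIcc_of_le (le_add_of_nonneg_right hc.le) ▸ uIoc_subset_uIcc ht)).symm) b₁ b₂

noncomputable def fourierKernel (n : ℤ) (t : ℝ) : ℂ :=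
  Complex.exp ((-2) * (π : ℂ) * Complex.I * n * t)

lemma fourierKernel_add (n : ℤ) (s t : ℝ) :
    fourierKernel n (s + t) = fourierKernel n s * fourierKernel n t := by
  simp only [fourierKernel, ← Complex.exp_add]
  push_cast
  ring_nf

lemma fourierKernel_periodic (n : ℤ) : Periodic (fourierKernel n) 1 := by
  intro t
  simp only [fourierKernel]
  conv_rhs => rw [← mul_one (Complex.exp _), ← Complex.exp_int_mul_two_pi_mul_I (-n),
    ← Complex.exp_add]
  push_cast
  ring_nf

@[fun_prop]
lemma continuous_fourierKernel (n : ℤ) : Continuous (fourierKernel n) := by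
  unfold fourierKernel
  fun_prop

lemma fourierKernel_add_fourierKernel_neg (n : ℤ) (s : ℝ) :
    fourierKernel n s + fourierKernel n (-s) = ((2 * cos (2 * π * n * s) : ℝ) : ℂ) := by
  rw [fourierKernel, fourierKernel]
  push_cast
  rw [Complex.two_cos]
  ring_nf

section FourierCoefficients

variable {f g : ℝ → ℂ}

lemma fourierCoefP_eq_integral (f : ℝ → ℂ) (n : ℤ) :
    fourierCoefP f n = ∫ t in (0:ℝ)..1, f t * fourierKernel n t := rfl

lemma intervalIntegrable_mul_fourierKernel {a b : ℝ} (hf : IntervalIntegrable f volume a b)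
    (n : ℤ) : IntervalIntegrable (fun t => f t * fourierKernel n t) volume a b :=
  hf.mul_continuousOn (continuous_fourierKernel n).continuousOn

lemma fourierCoefP_add (hf : IntervalIntegrable f volume 0 1)
    (hg : IntervalIntegrable g volume 0 1) (n : ℤ) :
    fourierCoefP (fun t => f t + g t) n = fourierCoefP f n + fourierCoefP g n := by
  simp only [fourierCoefP_eq_integral, add_mul]
  exact integral_add (intervalIntegrable_mul_fourierKernel hf n)
    (intervalIntegrable_mul_fourierKernel hg n)

lemma fourierCoefP_sub (hf : IntervalIntegrable f volume 0 1)
    (hg : IntervalIntegrable g volume 0 1) (n : ℤ) :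
    fourierCoefP (fun t => f t - g t) n = fourierCoefP f n - fourierCoefP g n := by
  simp only [fourierCoefP_eq_integral, sub_mul]
  exact integral_sub (intervalIntegrable_mul_fourierKernel hf n)
    (intervalIntegrable_mul_fourierKernel hg n)

lemma fourierCoefP_const_mul (c : ℂ) (f : ℝ → ℂ) (n : ℤ) :
    fourierCoefP (fun t => c * f t) n = c * fourierCoefP f n := by
  simp only [fourierCoefP_eq_integral, mul_assoc, intervalIntegral.integral_const_mul]

lemma fourierCoefP_eq_integral_of_periodic (hf : Periodic f 1) (n : ℤ) (a : ℝ) :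
    fourierCoefP f n = ∫ t in a..a + 1, f t * fourierKernel n t := by
  have hper : Periodic (fun t => f t * fourierKernel n t) 1 := fun t => by
    simp only [hf t, fourierKernel_periodic n t]
  have := hper.intervalIntegral_add_eq 0 a
  rwa [zero_add] at this

lemma fourierCoefP_comp_add_right (hf : Periodic f 1) (n : ℤ) (s : ℝ) :
    fourierCoefP (fun t => f (t + s)) n = fourierKernel n (-s) * fourierCoefP f n := by
  have hshift : ∀ t, f (t + s) * fourierKernel n t
      = fourierKernel n (-s) * (f (t + s) * fourierKernel n (t + s)) := fun t => by
    rw [show t = t + s + -s by ring, fourierKernel_add]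
    simp only [add_neg_cancel_right]
    ring
  rw [fourierCoefP_eq_integral, integral_congr fun t _ => hshift t,
    intervalIntegral.integral_const_mul,
    integral_comp_add_right (fun t => f t * fourierKernel n t), zero_add,
    add_comm 1 s, ← fourierCoefP_eq_integral_of_periodic hf]

lemma intervalIntegrable_comp_add_right_of_forall
    (hfi : ∀ a b, IntervalIntegrable f volume a b) (s a b : ℝ) :
    IntervalIntegrable (fun t => f (t + s)) volume a b := by
  simpa using (hfi (a + s) (b + s)).comp_add_right s

lemma intervalIntegrable_comp_sub_add_comp_add (hfi : ∀ a b, IntervalIntegrable f volume a b)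
    (s : ℝ) : IntervalIntegrable (fun t => f (t - s) + f (t + s)) volume 0 1 := by
  simpa only [sub_eq_add_neg] using (intervalIntegrable_comp_add_right_of_forall hfi (-s) 0 1).add
    (intervalIntegrable_comp_add_right_of_forall hfi s 0 1)

lemma fourierCoefP_comp_sub_add_comp_add (hf : Periodic f 1)
    (hfi : ∀ a b, IntervalIntegrable f volume a b) (n : ℤ) (s : ℝ) :
    fourierCoefP (fun t => f (t - s) + f (t + s)) n
      = ((2 * cos (2 * π * n * s) : ℝ) : ℂ) * fourierCoefP f n := by
  simp only [sub_eq_add_neg]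
  rw [fourierCoefP_add (intervalIntegrable_comp_add_right_of_forall hfi _ 0 1)
    (intervalIntegrable_comp_add_right_of_forall hfi _ 0 1), fourierCoefP_comp_add_right hf,
    fourierCoefP_comp_add_right hf, neg_neg, ← add_mul, fourierKernel_add_fourierKernel_neg]

end FourierCoefficients

noncomputable def triangle (h x : ℝ) : ℝ := max 0 (1 - |x| / h)

lemma triangle_neg (h x : ℝ) : triangle h (-x) = triangle h x := by
  rw [triangle, triangle, abs_neg]

lemma triangle_eq_zero {h x : ℝ} (hh : 0 < h) (hx : h ≤ |x|) : triangle h x = 0 :=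
  max_eq_left (by rw [sub_nonpos, le_div_iff₀ hh, one_mul]; exact hx)

lemma triangle_of_nonneg_of_le {h x : ℝ} (hh : 0 < h) (hx0 : 0 ≤ x) (hxh : x ≤ h) :
    triangle h x = 1 - x / h := by
  rw [triangle, abs_of_nonneg hx0]
  exact max_eq_right (by rw [sub_nonneg, div_le_one hh]; exact hxh)

@[fun_prop]
lemma continuous_triangle (h : ℝ) : Continuous (triangle h) := by
  unfold triangle
  fun_prop

noncomputable def trapezoid (h x : ℝ) : ℝ := min 1 (max 0 (2 - |x| / h))

lemma trapezoid_eq_triangle_add {h : ℝ} (hh : 0 < h) (x : ℝ) :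
    trapezoid h x = triangle h (x - h) + triangle h x + triangle h (x + h) := by
  have hdiv : ∀ y, |y| / h = |y / h| := fun y => by rw [abs_div, abs_of_pos hh]
  have hsub : (x - h) / h = x / h - 1 := by field_simp
  have hadd : (x + h) / h = x / h + 1 := by field_simp
  simp only [trapezoid, triangle, hdiv, hsub, hadd]
  grind

@[fun_prop]
lemma continuous_trapezoid (h : ℝ) : Continuous (trapezoid h) := by
  unfold trapezoid
  fun_prop

noncomputable def triangleCoeff (h : ℝ) (n : ℤ) : ℝ :=
  if n = 0 then h else (1 - cos (2 * π * n * h)) / (2 * π ^ 2 * n ^ 2 * h)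

lemma triangleCoeff_neg (h : ℝ) (n : ℤ) : triangleCoeff h (-n) = triangleCoeff h n := by
  simp only [triangleCoeff, neg_eq_zero, Int.cast_neg, neg_sq, mul_neg, neg_mul, cos_neg]

lemma triangleCoeff_nonneg {h : ℝ} (hh : 0 < h) (n : ℤ) : 0 ≤ triangleCoeff h n := by
  unfold triangleCoeff
  split_ifs
  · exact hh.le
  · exact div_nonneg (sub_nonneg.mpr (cos_le_one _)) (by positivity)

lemma triangleCoeff_le {h : ℝ} (hh : 0 < h) (n : ℤ) : triangleCoeff h n ≤ h := by
  unfold triangleCoeff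
  split_ifs with hn
  · exact le_rfl
  · have : (0 : ℝ) < n ^ 2 := by positivity
    rw [div_le_iff₀ (by positivity)]
    nlinarith [one_sub_sq_div_two_le_cos (x := 2 * π * n * h)]

lemma integral_one_sub_div_mul_cos {h ω : ℝ} (hh : h ≠ 0) (hω : ω ≠ 0) :
    ∫ t in (0:ℝ)..h, (1 - t / h) * cos (ω * t) = (1 - cos (ω * h)) / (ω ^ 2 * h) := by
  have hderiv : ∀ t ∈ uIcc 0 h, HasDerivAt
      (fun t => (1 - t / h) * (sin (ω * t) / ω) - cos (ω * t) / (ω ^ 2 * h))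
      ((1 - t / h) * cos (ω * t)) t := fun t _ => by
    have hωt : HasDerivAt (fun t => ω * t) ω t := by simpa using (hasDerivAt_id t).const_mul ω
    have H := ((((hasDerivAt_id t).div_const h).const_sub 1).mul
      (((hasDerivAt_sin _).comp t hωt).div_const ω)).sub
      (((hasDerivAt_cos _).comp t hωt).div_const (ω ^ 2 * h))
    refine H.congr_deriv ?_
    simp only [id, comp_apply]
    field_simp
    ring
  rw [integral_eq_sub_of_hasDerivAt hderiv (by apply Continuous.intervalIntegrable; fun_prop)]
  simp only [mul_zero, sin_zero, cos_zero, div_self hh, sub_self, zero_mul, zero_div]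
  field_simp
  ring

lemma integral_triangle_mul_two_cos {h : ℝ} (hh : 0 < h) (n : ℤ) :
    ∫ t in (0:ℝ)..h, triangle h t * (2 * cos (2 * π * n * t)) = triangleCoeff h n := by
  rw [integral_congr (g := fun t => 2 * ((1 - t / h) * cos (2 * π * n * t))) fun t ht => by
    rw [uIcc_of_le hh.le] at ht
    simp only [triangle_of_nonneg_of_le hh ht.1 ht.2]
    ring, intervalIntegral.integral_const_mul]
  rcases eq_or_ne n 0 with rfl | hn
  · simp only [Int.cast_zero, mul_zero, zero_mul, cos_zero, mul_one, triangleCoeff, if_true]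
    rw [integral_sub intervalIntegrable_const (intervalIntegrable_id.div_const h),
      intervalIntegral.integral_div, integral_id, intervalIntegral.integral_const, smul_eq_mul]
    field_simp
    ring
  · have hω : 2 * π * n ≠ 0 := by positivity
    rw [integral_one_sub_div_mul_cos hh.ne' hω, triangleCoeff, if_neg hn]
    field_simp

lemma integral_triangle_mul_fourierKernel {h : ℝ} (hh : 0 < h) (hh2 : h ≤ 1/2) (n : ℤ) :
    ∫ t in -(1/2:ℝ)..1/2, (triangle h t : ℂ) * fourierKernel n t = triangleCoeff h n := by
  set g : ℝ → ℂ := fun t => (triangle h t : ℂ) * fourierKernel n t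
  have hg : Continuous g := by fun_prop
  have hfold : ∀ t, g (-t) + g t = ((triangle h t * (2 * cos (2 * π * n * t)) : ℝ) : ℂ) :=
    fun t => by
      simp only [g, triangle_neg, ← mul_add, add_comm (fourierKernel n (-t)),
        fourierKernel_add_fourierKernel_neg, Complex.ofReal_mul]
  have htail : ∫ t in h..1/2, triangle h t * (2 * cos (2 * π * n * t)) = 0 := by
    rw [← integral_zero (a := h) (b := 1/2)]
    refine integral_congr fun t ht => ?_
    rw [uIcc_of_le hh2] at ht
    rw [triangle_eq_zero hh (ht.1.trans (le_abs_self t)), zero_mul]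
  calc ∫ t in -(1/2:ℝ)..1/2, g t
      = ∫ t in (0:ℝ)..1/2, (g (-t) + g t) := by
        have hneg : IntervalIntegrable (fun t => g (-t)) volume 0 (1/2) :=
          (hg.comp continuous_neg).intervalIntegrable _ _
        rw [integral_add hneg (hg.intervalIntegrable _ _), integral_comp_neg (fun t => g t),
          neg_zero,
          integral_add_adjacent_intervals (hg.intervalIntegrable _ _) (hg.intervalIntegrable _ _)]
    _ = ((∫ t in (0:ℝ)..1/2, triangle h t * (2 * cos (2 * π * n * t)) : ℝ) : ℂ) := by
        simp only [hfold, intervalIntegral.integral_ofReal]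
    _ = triangleCoeff h n := by
        rw [← integral_add_adjacent_intervals (b := h), htail, add_zero,
          integral_triangle_mul_two_cos hh]
        all_goals exact Continuous.intervalIntegrable (by fun_prop) _ _

-- `x ^ 2 - x + 1 / 6` is the Bernoulli polynomial `B₂(x)`.
lemma hasSum_one_div_sq_mul_cos {x : ℝ} (hx : x ∈ Icc 0 1) :
    HasSum (fun n : ℕ => 1 / (n : ℝ) ^ 2 * cos (2 * π * n * x)) (π ^ 2 * (x ^ 2 - x + 1 / 6)) := by
  convert hasSum_one_div_nat_pow_mul_cos one_ne_zero hx using 1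
  rw [show 2 * 1 = 2 from rfl]
  simp [Polynomial.bernoulli, Finset.sum_range_succ]
  ring

lemma hasSum_triangleCoeff_nat_add_one {h : ℝ} (hh : 0 < h) (hh1 : h ≤ 1) :
    HasSum (fun n : ℕ => triangleCoeff h (n + 1)) ((1 - h) / 2) := by
  set g : ℕ → ℝ := fun n => (1 / (n : ℝ) ^ 2 - 1 / (n : ℝ) ^ 2 * cos (2 * π * n * h)) /
    (2 * π ^ 2 * h)
  have hg : HasSum g ((1 - h) / 2) := by
    have hval : (1 - h) / 2 = (π ^ 2 / 6 - π ^ 2 * (h ^ 2 - h + 1 / 6)) / (2 * π ^ 2 * h) := by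
      field_simp
      ring
    rw [hval]
    exact (hasSum_zeta_two.sub (hasSum_one_div_sq_mul_cos ⟨hh.le, hh1⟩)).div_const _
  have hshift : (fun n : ℕ => triangleCoeff h (n + 1)) = fun n => g (n + 1) := by
    funext n
    rw [triangleCoeff, if_neg (by omega)]
    simp only [g]
    push_cast
    field_simp
  rw [hshift]
  simpa [g] using (hasSum_nat_add_iff' 1).mpr hg

lemma hasSum_triangleCoeff {h : ℝ} (hh : 0 < h) (hh1 : h ≤ 1) : HasSum (triangleCoeff h) 1 := by
  have hpos := hasSum_triangleCoeff_nat_add_one hh hh1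
  have hneg : HasSum (fun n : ℕ => triangleCoeff h (-(n + 1))) ((1 - h) / 2) := by
    simpa only [triangleCoeff_neg] using hpos
  have htotal : (1 - h) / 2 + triangleCoeff h 0 + (1 - h) / 2 = 1 := by
    rw [triangleCoeff, if_pos rfl]
    ring
  exact htotal ▸ hpos.of_add_one_of_neg_add_one hneg

lemma intervalIntegrable_ofReal_of_eqOn {f g : ℝ → ℝ} (hf : Periodic f 1) (hg : Continuous g)
    (hfg : ∀ t ∈ Icc (-(1/2) : ℝ) (1/2), f t = g t) (a b : ℝ) :
    IntervalIntegrable (fun t => (f t : ℂ)) volume a b :=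
  (hf.comp Complex.ofReal).intervalIntegrable_of_eqOn one_pos
    (Complex.continuous_ofReal.comp hg) (-(1/2))
    (fun t ht => by simp only [comp_apply, hfg t ⟨ht.1, by linarith [ht.2]⟩]) a b

section PeriodicTriangle

variable {h : ℝ} {Δ τ : ℝ → ℝ}

lemma eq_triangle_of_abs_le (hh : 0 < h) (hΔ : Periodic Δ 1)
    (hΔdef : ∀ t ∈ Icc (-(1/2) : ℝ) (1/2), Δ t = triangle h t) {s : ℝ} (hs : |s| ≤ 1 - h) :
    Δ s = triangle h s := by
  rcases le_or_gt |s| (1/2) with hs2 | hs2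
  · exact hΔdef s (abs_le.mp hs2)
  have hzero : triangle h s = 0 := triangle_eq_zero hh (by linarith)
  rcases le_or_gt 0 s with hs0 | hs0
  · rw [abs_of_nonneg hs0] at hs hs2
    rw [← hΔ.sub_eq, hΔdef _ ⟨by linarith, by linarith⟩, hzero,
      triangle_eq_zero hh (by rw [abs_of_neg (by linarith)]; linarith)]
  · rw [abs_of_neg hs0] at hs hs2
    rw [← hΔ s, hΔdef _ ⟨by linarith, by linarith⟩, hzero,
      triangle_eq_zero hh (by rw [abs_of_pos (by linarith)]; linarith)]

lemma eq_triangle_shifts_of_eq_trapezoid (hh : 0 < h) (hh4 : h ≤ 1/4) (hΔ : Periodic Δ 1)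
    (hΔdef : ∀ t ∈ Icc (-(1/2) : ℝ) (1/2), Δ t = triangle h t) (hτ : Periodic τ 1)
    (hτdef : ∀ t ∈ Icc (-(1/2) : ℝ) (1/2), τ t = trapezoid h t) :
    τ = fun t => Δ (t - h) + Δ t + Δ (t + h) := by
  refine hτ.eq_of_eqOn_Ico (((hΔ.sub_const h).add hΔ).add (hΔ.add_const h)) one_pos (-(1/2))
    fun t ht => ?_
  have ht' : t ∈ Icc (-(1/2) : ℝ) (1/2) := ⟨ht.1, by linarith [ht.2]⟩
  have habs := abs_le.mpr ht'
  rw [hτdef t ht', trapezoid_eq_triangle_add hh,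
    eq_triangle_of_abs_le hh hΔ hΔdef (s := t - h) (by linarith [abs_sub t h, abs_of_pos hh]),
    eq_triangle_of_abs_le hh hΔ hΔdef (s := t) (by linarith),
    eq_triangle_of_abs_le hh hΔ hΔdef (s := t + h) (by linarith [abs_add_le t h, abs_of_pos hh])]

lemma fourierCoefP_ofReal_eq_triangleCoeff (hh : 0 < h) (hh2 : h ≤ 1/2) (hΔ : Periodic Δ 1)
    (hΔdef : ∀ t ∈ Icc (-(1/2) : ℝ) (1/2), Δ t = triangle h t) (n : ℤ) :
    fourierCoefP (fun t => (Δ t : ℂ)) n = triangleCoeff h n := by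
  rw [fourierCoefP_eq_integral_of_periodic (f := fun t => (Δ t : ℂ))
      (hΔ.comp Complex.ofReal) n (-(1/2)),
    show -(1/2) + 1 = (1/2 : ℝ) by norm_num, ← integral_triangle_mul_fourierKernel hh hh2 n]
  refine integral_congr fun t ht => ?_
  rw [uIcc_of_le (by norm_num)] at ht
  simp only [hΔdef t ht]

lemma fourierCoefP_ofReal_eq_one_add_two_cos_mul_triangleCoeff (hh : 0 < h) (hh4 : h ≤ 1/4)
    (hΔ : Periodic Δ 1) (hΔdef : ∀ t ∈ Icc (-(1/2) : ℝ) (1/2), Δ t = triangle h t)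
    (hτ : Periodic τ 1) (hτdef : ∀ t ∈ Icc (-(1/2) : ℝ) (1/2), τ t = trapezoid h t) (n : ℤ) :
    fourierCoefP (fun t => (τ t : ℂ)) n
      = ((1 + 2 * cos (2 * π * n * h)) * triangleCoeff h n : ℝ) := by
  have hF := intervalIntegrable_ofReal_of_eqOn hΔ (continuous_triangle h) hΔdef
  have hτΔ : (fun t => (τ t : ℂ)) = fun t => (Δ t : ℂ) + ((Δ (t - h) : ℂ) + (Δ (t + h) : ℂ)) := by
    funext t
    rw [congrFun (eq_triangle_shifts_of_eq_trapezoid hh hh4 hΔ hΔdef hτ hτdef) t]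
    push_cast
    ring
  rw [hτΔ, fourierCoefP_add (hF 0 1) (intervalIntegrable_comp_sub_add_comp_add hF h),
    fourierCoefP_comp_sub_add_comp_add (f := fun t => (Δ t : ℂ)) (hΔ.comp Complex.ofReal) hF,
    fourierCoefP_ofReal_eq_triangleCoeff hh (by linarith) hΔ hΔdef]
  push_cast
  ring

lemma fourierCoefP_six_mul_sub_trapezoid_shifts (hh : 0 < h) (hh4 : h ≤ 1/4)
    (hΔ : Periodic Δ 1) (hΔdef : ∀ t ∈ Icc (-(1/2) : ℝ) (1/2), Δ t = triangle h t)
    (hτ : Periodic τ 1) (hτdef : ∀ t ∈ Icc (-(1/2) : ℝ) (1/2), τ t = trapezoid h t)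
    (a : ℝ) (n : ℤ) :
    fourierCoefP (fun t => ((6 * Δ t - τ (t + a) - τ (t - a) : ℝ) : ℂ)) n
      = ((6 - 2 * cos (2 * π * n * a) * (1 + 2 * cos (2 * π * n * h))) * triangleCoeff h n
          : ℝ) := by
  have hF := intervalIntegrable_ofReal_of_eqOn hΔ (continuous_triangle h) hΔdef
  have hT := intervalIntegrable_ofReal_of_eqOn hτ (continuous_trapezoid h) hτdef
  have hψ : (fun t => ((6 * Δ t - τ (t + a) - τ (t - a) : ℝ) : ℂ))
      = fun t => 6 * (Δ t : ℂ) - ((τ (t - a) : ℂ) + (τ (t + a) : ℂ)) := by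
    funext t
    push_cast
    ring
  rw [hψ, fourierCoefP_sub ((hF 0 1).const_mul 6) (intervalIntegrable_comp_sub_add_comp_add hT a),
    fourierCoefP_const_mul,
    fourierCoefP_comp_sub_add_comp_add (f := fun t => (τ t : ℂ)) (hτ.comp Complex.ofReal) hT,
    fourierCoefP_ofReal_eq_one_add_two_cos_mul_triangleCoeff hh hh4 hΔ hΔdef hτ hτdef,
    fourierCoefP_ofReal_eq_triangleCoeff hh (by linarith) hΔ hΔdef]
  push_cast
  ring

end PeriodicTriangle

lemma abs_two_cos_mul_one_add_two_cos_le (x y : ℝ) : |2 * cos x * (1 + 2 * cos y)| ≤ 6 := by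
  rw [abs_le]
  constructor <;> nlinarith [neg_one_le_cos x, cos_le_one x, neg_one_le_cos y, cos_le_one y]

lemma tsum_rpow_le_of_le_mul {ι : Type*} {w c : ι → ℝ} {C h p : ℝ} (hw : HasSum w 1)
    (hw0 : ∀ i, 0 ≤ w i) (hwh : ∀ i, w i ≤ h) (hc0 : ∀ i, 0 ≤ c i) (hC : 0 ≤ C)
    (hcw : ∀ i, c i ≤ C * w i) (hp : 1 ≤ p) :
    ∑' i, c i ^ p ≤ C ^ p * h ^ (p - 1) := by
  have hw_rpow : ∀ i, w i ^ p ≤ h ^ (p - 1) * w i := fun i => by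
    rcases (hw0 i).eq_or_lt with hwi | hwi
    · rw [← hwi, zero_rpow (by linarith), mul_zero]
    · calc w i ^ p = w i ^ (p - 1) * w i := by rw [← rpow_add_one hwi.ne']; ring_nf
        _ ≤ h ^ (p - 1) * w i := by
          gcongr
          exact hwh i
  have hbound : ∀ i, c i ^ p ≤ C ^ p * h ^ (p - 1) * w i := fun i =>
    calc c i ^ p ≤ (C * w i) ^ p := rpow_le_rpow (hc0 i) (hcw i) (by linarith)
      _ = C ^ p * w i ^ p := mul_rpow hC (hw0 i)
      _ ≤ C ^ p * h ^ (p - 1) * w i := by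
        rw [mul_assoc]; exact mul_le_mul_of_nonneg_left (hw_rpow i) (by positivity)
  have hsum : HasSum (fun i => C ^ p * h ^ (p - 1) * w i) (C ^ p * h ^ (p - 1)) := by
    simpa using hw.mul_left (C ^ p * h ^ (p - 1))
  calc ∑' i, c i ^ p ≤ ∑' i, C ^ p * h ^ (p - 1) * w i :=
        Summable.tsum_le_tsum hbound
          (hsum.summable.of_nonneg_of_le (fun i => rpow_nonneg (hc0 i) p) hbound) hsum.summable
    _ = C ^ p * h ^ (p - 1) := hsum.tsum_eq

theorem stmt13_general (a h : ℝ) (hh0 : 0 < h) (hh1 : h < 1/4)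
    (Δ τ : ℝ → ℝ)
    (hΔper : ∀ t, Δ (t + 1) = Δ t)
    (hΔdef : ∀ t ∈ Set.Icc (-(1/2) : ℝ) (1/2), Δ t = max 0 (1 - |t| / h))
    (hτper : ∀ t, τ (t + 1) = τ t)
    (hτdef : ∀ t ∈ Set.Icc (-(1/2) : ℝ) (1/2), τ t = min 1 (max 0 (2 - |t| / h)))
    (ψ : ℝ → ℝ)
    (hψ : ∀ t, ψ t = 6 * Δ t - τ (t + a) - τ (t - a)) :
    (∀ n : ℤ, (fourierCoefP (fun t => (ψ t : ℂ)) n).im = 0 ∧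
      0 ≤ (fourierCoefP (fun t => (ψ t : ℂ)) n).re) ∧
    ∀ p : ℝ, 1 ≤ p →
      (∑' n : ℤ, ‖fourierCoefP (fun t => (ψ t : ℂ)) n‖ ^ p) ≤ 12 ^ p * h ^ (p - 1) := by
  set ν : ℤ → ℝ := fun n => 2 * cos (2 * π * n * a) * (1 + 2 * cos (2 * π * n * h))
  have hν : ∀ n, |ν n| ≤ 6 := fun n => abs_two_cos_mul_one_add_two_cos_le _ _
  have hcoef : ∀ n, fourierCoefP (fun t => (ψ t : ℂ)) n = ((6 - ν n) * triangleCoeff h n : ℝ) :=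
    fun n => by
      simpa only [hψ] using fourierCoefP_six_mul_sub_trapezoid_shifts hh0 hh1.le hΔper hΔdef
        hτper hτdef a n
  have hcoef_nonneg : ∀ n, 0 ≤ (6 - ν n) * triangleCoeff h n := fun n =>
    mul_nonneg (by linarith [(abs_le.mp (hν n)).2]) (triangleCoeff_nonneg hh0 n)
  refine ⟨fun n => ?_, fun p hp => ?_⟩
  · rw [hcoef, Complex.ofReal_im, Complex.ofReal_re]
    exact ⟨rfl, hcoef_nonneg n⟩
  · simp only [hcoef, Complex.norm_real, norm_eq_abs, abs_of_nonneg (hcoef_nonneg _)]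
    refine tsum_rpow_le_of_le_mul (hasSum_triangleCoeff hh0 (by linarith))
      (triangleCoeff_nonneg hh0) (triangleCoeff_le hh0) hcoef_nonneg (by norm_num) (fun n => ?_) hp
    exact mul_le_mul_of_nonneg_right (by linarith [(abs_le.mp (hν n)).1])
      (triangleCoeff_nonneg hh0 n)

/-- For `0 < h < 1/4`, `2h < a < 1/2 - 2h`, and `ψ(t) = 6Δ_h(t) - τ_h(t+a) - τ_h(t-a)`
(with `Δ_h` the triangle and `τ_h` the trapezoid function), one has `ψ̂(n) ≥ 0` for all
`n ∈ ℤ` and `‖ψ‖_{A^p(𝕋)}^p ≤ 12^p h^{p-1}` for every `p ≥ 1`. -/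
theorem stmt13 (a h : ℝ) (hh0 : 0 < h) (hh1 : h < 1/4)
    (h1 : 2 * h < a) (h2 : a < 1/2 - 2 * h)
    (Δ τ : ℝ → ℝ)
    (hΔper : ∀ t, Δ (t + 1) = Δ t)
    (hΔdef : ∀ t ∈ Set.Icc (-(1/2) : ℝ) (1/2), Δ t = max 0 (1 - |t| / h))
    (hτper : ∀ t, τ (t + 1) = τ t)
    (hτdef : ∀ t ∈ Set.Icc (-(1/2) : ℝ) (1/2), τ t = min 1 (max 0 (2 - |t| / h)))
    (ψ : ℝ → ℝ)
    (hψ : ∀ t, ψ t = 6 * Δ t - τ (t + a) - τ (t - a)) :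
    (∀ n : ℤ, (fourierCoefP (fun t => (ψ t : ℂ)) n).im = 0 ∧
      0 ≤ (fourierCoefP (fun t => (ψ t : ℂ)) n).re) ∧
    ∀ p : ℝ, 1 ≤ p →
      (∑' n : ℤ, ‖fourierCoefP (fun t => (ψ t : ℂ)) n‖ ^ p) ≤ 12 ^ p * h ^ (p - 1) :=
  stmt13_general a h hh0 hh1 Δ τ hΔper hΔdef hτper hτdef ψ hψ
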